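/- If λ is an infinite cardinal and U is an ultrafilter over κ which is (λ,λ;α_n)-nonregular for each n < ω, then U is (λ,ℵ₀; Σ_{n<ω} α_n)-nonregular. -/

import Mathlib

universe u

namespace UMeas

variable {A : Type u}

/-- The first `n` values of an infinite sequence, as a list. -/
def seg (s : ℕ → A) (n : ℕ) : List A := List.ofFn (fun i : Fin n => s i)

/-- `T` is a `U`-branching tree: a set of finite sequences closed under initial
segments, containing the empty sequence, whose branching sets are in `U`. -/
def IsUTree (U : Ultrafilter A) (T : Set (List A)) : Prop :=
  ([] ∈ T) ∧ (∀ σ ∈ T, ∀ τ : List A, τ <+: σ → τ ∈ T) ∧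
    ∀ σ ∈ T, {a : A | σ ++ [a] ∈ T} ∈ U

/-- The set of infinite branches through `T`. -/
def branches (T : Set (List A)) : Set (ℕ → A) := {s | ∀ n, seg s n ∈ T}

/-- Concatenation `σ⌢s` of a finite sequence with an infinite sequence. -/
def app (σ : List A) (s : ℕ → A) : ℕ → A :=
  fun n => if h : n < σ.length then σ.get ⟨n, h⟩ else s (n - σ.length)

/-- The section `X↾σ = {s | σ⌢s ∈ X}`. -/
def sect (X : Set (ℕ → A)) (σ : List A) : Set (ℕ → A) := {s | app σ s ∈ X}

def ULarge (U : Ultrafilter A) (X : Set (ℕ → A)) : Prop :=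
  ∃ T, IsUTree U T ∧ branches T ⊆ X

def USmall (U : Ultrafilter A) (X : Set (ℕ → A)) : Prop :=
  ∃ T, IsUTree U T ∧ branches T ∩ X = ∅

def UDetermined (U : Ultrafilter A) (X : Set (ℕ → A)) : Prop :=
  ULarge U X ∨ USmall U X

def UNull (U : Ultrafilter A) (X : Set (ℕ → A)) : Prop :=
  ∀ σ : List A, USmall U (sect X σ)

def UMeasurable (U : Ultrafilter A) (X : Set (ℕ → A)) : Prop :=
  ∀ σ : List A, UDetermined U (sect X σ)

end UMeas

namespace UMeas

/-- Sequences of ordinal length `β` with values in `A`. -/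
def OSeq (A : Type u) (β : Ordinal.{u}) := ∀ γ : Ordinal.{u}, γ < β → A

/-- Restriction `s↾γ` of an ordinal-length sequence. -/
def ores {A : Type u} {β : Ordinal.{u}} (s : OSeq A β) (γ : Ordinal.{u}) (h : γ ≤ β) :
    OSeq A γ := fun δ hδ => s δ (hδ.trans_le h)

/-- Extension `s⌢⟨a⟩` of an ordinal-length sequence by one element. -/
noncomputable def oext {A : Type u} {β : Ordinal.{u}} (s : OSeq A β) (a : A) : OSeq A (β + 1) :=
  fun δ hδ => if h : δ < β then s δ h else a

/-- A closed `U`-branching tree of height `α`: for each `β`, `mem β` is the set of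
sequences of length `β` in the tree (only levels `β < α` are relevant). -/
structure ClosedUBT (A : Type u) (U : Ultrafilter A) (α : Ordinal.{u}) where
  mem : ∀ β : Ordinal.{u}, Set (OSeq A β)
  isTree : ∀ β γ : Ordinal.{u}, β < α → (h : γ ≤ β) → ∀ s ∈ mem β, ores s γ h ∈ mem γ
  succ : ∀ β : Ordinal.{u}, β + 1 < α → ∀ s ∈ mem β, {a : A | oext s a ∈ mem (β + 1)} ∈ U
  nonsucc : ∀ β : Ordinal.{u}, β < α → (¬ ∃ γ : Ordinal.{u}, β = γ + 1) →
    ∀ s : OSeq A β, s ∈ mem β ↔ ∀ γ : Ordinal.{u}, (h : γ < β) → ores s γ h.le ∈ mem γ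

/-- `U` is `(l, m; α)`-regular: there is a family of `l` closed `U`-branching trees of
height `α + 1` such that no subfamily of size `m` has a common maximal element. -/
def LMARegular {A : Type u} (U : Ultrafilter A) (l m : Cardinal.{u}) (α : Ordinal.{u}) : Prop :=
  ∃ T : (Cardinal.ord l).ToType → ClosedUBT A U (α + 1),
    ∀ S : Set (Cardinal.ord l).ToType, Cardinal.mk ↥S = m →
      ¬ ∃ s : OSeq A α, ∀ β ∈ S, s ∈ (T β).mem α

end UMeas

/-- Partial sums of a sequence of ordinals: `psum α n = α 0 + α 1 + ⋯ + α (n-1)`. -/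
def psum (α : ℕ → Ordinal.{u}) : ℕ → Ordinal.{u}
  | 0 => 0
  | n + 1 => psum α n + α n


/-!
Suppose the trees `T i` of height `σ + 1`, `σ = Σ αₙ`, witnessed `(l, ℵ₀; σ)`-regularity. By
recursion on `n` we build nodes `sₙ` of length `α₀ + ⋯ + αₙ₋₁`, each extending the previous one,
such that `sₙ` lies in `l` many of the trees and in `n` distinct trees `T i₀, …, T iₙ₋₁` picked
along the way. For the step, apply `(l, l; αₙ)`-nonregularity to the family, indexed by the current
`l` trees `T i`, of the parts of `T i ∩ T i₀ ∩ ⋯ ∩ T iₙ₋₁` above `sₙ`: `l` of them share a node `t`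
of length `αₙ`, so `sₙ⌢t` lies in those `l` trees and in every `T iₖ`, and `iₙ` is a new index
among the `l`. The trees being closed, the union of the `sₙ` lies in every `T iₖ`, a common maximal
element of a countable subfamily.
-/

lemma monotone_psum (α : ℕ → Ordinal.{u}) : Monotone (psum α) :=
  monotone_nat_of_le_succ fun _ => le_self_add

namespace UMeas

open Cardinal Set

variable {A : Type u} {U : Ultrafilter A}

lemma not_exists_add_eq_add_one {p β : Ordinal.{u}} (h0 : β ≠ 0)
    (hβ : ¬∃ γ : Ordinal.{u}, β = γ + 1) : ¬∃ δ : Ordinal.{u}, p + β = δ + 1 := by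
  have hlim : Order.IsSuccLimit β := by
    rcases Ordinal.zero_or_succ_or_isSuccLimit β with h | ⟨γ, h⟩ | h
    · exact absurd h h0
    · exact absurd ⟨γ, h.symm.trans (Order.succ_eq_add_one γ)⟩ hβ
    · exact h
  rintro ⟨δ, hδ⟩
  exact Order.not_isSuccLimit_succ δ
    (by rw [Order.succ_eq_add_one, ← hδ]; exact Ordinal.isSuccLimit_add p hlim)

section OSeq

variable {β γ p : Ordinal.{u}}

lemma ores_ores (s : OSeq A β) (hγ : γ ≤ β) {δ : Ordinal.{u}} (hδ : δ ≤ γ) :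
    ores (ores s γ hγ) δ hδ = ores s δ (hδ.trans hγ) := rfl

noncomputable def oconcat (s : OSeq A p) (t : OSeq A β) : OSeq A (p + β) :=
  fun γ h => if h' : γ < p then s γ h' else t (γ - p) ((Ordinal.sub_lt_of_le (not_lt.1 h')).2 h)

lemma ores_oconcat_of_le (s : OSeq A p) (t : OSeq A β) (hγ : γ ≤ p) :
    ores (oconcat s t) γ (hγ.trans le_self_add) = ores s γ hγ := by
  funext δ hδ
  simp only [ores, oconcat, dif_pos (hδ.trans_le hγ)]

lemma oconcat_ores (s : OSeq A p) (t : OSeq A β) (hγ : γ ≤ β) :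
    oconcat s (ores t γ hγ) = ores (oconcat s t) (p + γ) (add_le_add_right hγ p) := rfl

lemma ores_oext_oconcat (s : OSeq A p) (t : OSeq A β) (a : A) :
    ores (oext (oconcat s t) a) (p + (β + 1)) (add_assoc p β 1).ge = oconcat s (oext t a) := by
  funext δ hδ
  simp only [ores, oconcat, oext]
  rcases lt_or_ge δ p with hδp | hpδ
  · rw [dif_pos (hδp.trans_le le_self_add), dif_pos hδp, dif_pos hδp]
  · simp only [dif_neg (not_lt.2 hpδ), Ordinal.sub_lt_of_le hpδ]

lemma ClosedUBT.ores_mem_iff_of_eq {α : Ordinal.{u}} (T : ClosedUBT A U α) (s : OSeq A β)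
    (h : γ = β) : ores s γ h.le ∈ T.mem γ ↔ s ∈ T.mem β := by
  subst h; rfl

end OSeq

namespace ClosedUBT

variable {α : Ordinal.{u}}

def biInter {ι : Type*} (T : ι → ClosedUBT A U α) (F : Finset ι) : ClosedUBT A U α where
  mem β := {s | ∀ i ∈ F, s ∈ (T i).mem β}
  isTree β γ hβ hγ s hs i hi := (T i).isTree β γ hβ hγ s (hs i hi)
  succ β hβ s hs := (Filter.eventually_all_finset F).2 fun i hi => (T i).succ β hβ s (hs i hi)
  nonsucc β hβ hns s :=
    ⟨fun hs γ hγ i hi => ((T i).nonsucc β hβ hns s).1 (hs i hi) γ hγ,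
      fun hs i hi => ((T i).nonsucc β hβ hns s).2 fun γ hγ => hs γ hγ i hi⟩

noncomputable def above (T : ClosedUBT A U α) {p a : Ordinal.{u}} {s : OSeq A p}
    (hs : s ∈ T.mem p) (ha : p + a < α) : ClosedUBT A U (a + 1) where
  mem β := {t | oconcat s t ∈ T.mem (p + β)}
  isTree β γ hβ hγ t ht := by
    have hpβ : p + β < α := (add_le_add_right (Order.lt_add_one_iff.1 hβ) p).trans_lt ha
    show oconcat s (ores t γ hγ) ∈ T.mem (p + γ)
    rw [oconcat_ores]
    exact T.isTree _ _ hpβ _ _ ht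
  succ β hβ t ht := by
    have hpβ : p + β + 1 < α := by
      rw [add_assoc]
      exact (add_le_add_right (Order.lt_add_one_iff.1 hβ) p).trans_lt ha
    have hiff (x : A) :
        oconcat s (oext t x) ∈ T.mem (p + (β + 1)) ↔ oext (oconcat s t) x ∈ T.mem (p + β + 1) := by
      rw [← ores_oext_oconcat]
      exact T.ores_mem_iff_of_eq _ (add_assoc p β 1).symm
    show {x | oconcat s (oext t x) ∈ T.mem (p + (β + 1))} ∈ U
    simpa only [hiff] using T.succ _ hpβ _ ht
  nonsucc β hβ hns t := by
    have hpβ : p + β < α := (add_le_add_right (Order.lt_add_one_iff.1 hβ) p).trans_lt ha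
    refine ⟨fun ht γ hγ => ?_, fun h => ?_⟩
    · show oconcat s (ores t γ hγ.le) ∈ T.mem (p + γ)
      rw [oconcat_ores]
      exact T.isTree _ _ hpβ _ _ ht
    show oconcat s t ∈ T.mem (p + β)
    rcases eq_or_ne β 0 with rfl | h0
    · refine (T.ores_mem_iff_of_eq _ (add_zero p).symm).1 ?_
      rw [ores_oconcat_of_le s t le_rfl]
      exact hs
    refine (T.nonsucc _ hpβ (not_exists_add_eq_add_one h0 hns) _).2 fun η hη => ?_
    rcases le_or_gt η p with hηp | hpη
    · rw [ores_oconcat_of_le s t hηp]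
      exact T.isTree _ _ (le_self_add.trans_lt hpβ) _ _ hs
    · have hη' : η - p < β := (Ordinal.sub_lt_of_le hpη.le).2 hη
      have hmem := h _ hη'
      change oconcat s (ores t _ _) ∈ T.mem (p + (η - p)) at hmem
      rw [oconcat_ores] at hmem
      exact (T.ores_mem_iff_of_eq _ (Ordinal.add_sub_cancel_of_le hpη.le).symm).2 hmem

end ClosedUBT

namespace OSeq

variable {p : ℕ → Ordinal.{u}} (hp : Monotone p) (s : ∀ n, OSeq A (p n))
  (hs : ∀ n, ores (s (n + 1)) (p n) (hp n.le_succ) = s n)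

include hs in
lemma ores_eq_of_le {m n : ℕ} (hmn : m ≤ n) : ores (s n) (p m) (hp hmn) = s m := by
  induction n, hmn using Nat.le_induction with
  | base => rfl
  | succ n hmn ih =>
    calc ores (s (n + 1)) (p m) _ = ores (ores (s (n + 1)) (p n) (hp n.le_succ)) (p m) (hp hmn) :=
          rfl
      _ = s m := by rw [hs n, ih]

open scoped Classical in
noncomputable def limit : OSeq A (⨆ n, p n) := fun γ hγ =>
  s (Nat.find (exists_lt_of_lt_ciSup' hγ)) γ (Nat.find_spec (exists_lt_of_lt_ciSup' hγ))

include hs in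
lemma ores_limit (n : ℕ) :
    ores (limit s) (p n) (le_ciSup Ordinal.bddAbove_of_small n) = s n := by
  funext γ hγ
  classical
  simp only [ores, limit]
  rw [← ores_eq_of_le hp s hs (Nat.find_min' _ hγ)]
  rfl

include hs in
lemma limit_mem {α : Ordinal.{u}} (T : ClosedUBT A U α) (hα : ⨆ n, p n < α)
    (hmem : ∀ᶠ n in Filter.atTop, s n ∈ T.mem (p n)) : limit s ∈ T.mem (⨆ n, p n) := by
  have hbdd : BddAbove (range p) := Ordinal.bddAbove_of_small
  have hcofinal : ∀ γ < ⨆ n, p n, ∃ n, γ < p n ∧ s n ∈ T.mem (p n) := fun γ hγ => by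
    obtain ⟨m, hm⟩ := exists_lt_of_lt_ciSup' hγ
    obtain ⟨n, hn, hmn⟩ := (hmem.and (Filter.eventually_ge_atTop m)).exists
    exact ⟨n, hm.trans_le (hp hmn), hn⟩
  by_cases hsucc : ∃ δ, ⨆ n, p n = δ + 1
  · -- a successor supremum is attained
    obtain ⟨δ, hδ⟩ := hsucc
    obtain ⟨n, hn, hsn⟩ := hcofinal δ (hδ ▸ Order.lt_add_one_iff.2 le_rfl)
    have hpn : p n = ⨆ n, p n := le_antisymm (le_ciSup hbdd n) (hδ ▸ Order.add_one_le_of_lt hn)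
    refine (T.ores_mem_iff_of_eq _ hpn).1 ?_
    rw [ores_limit hp s hs]
    exact hsn
  · refine (T.nonsucc _ hα hsucc _).2 fun γ hγ => ?_
    obtain ⟨n, hn, hsn⟩ := hcofinal γ hγ
    have hγn := T.isTree _ _ ((le_ciSup hbdd n).trans_lt hα) hn.le _ hsn
    rwa [← ores_limit hp s hs, ores_ores] at hγn

end OSeq

lemma mk_iUnion_coe_finset_eq_aleph0 {ι : Type u} {F : ℕ → Finset ι} (hF : StrictMono F) :
    #(⋃ n, (F n : Set ι)) = ℵ₀ :=
  have : Countable (⋃ n, (F n : Set ι)) :=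
    (countable_iUnion fun n => (F n).countable_toSet).to_subtype
  have : Infinite (⋃ n, (F n : Set ι)) :=
    (infinite_iUnion (Finset.coe_injective.comp hF.injective)).to_subtype
  mk_eq_aleph0 _

variable {l : Cardinal.{u}} {ι : Type u} {σ : Ordinal.{u}}

lemma exists_oconcat_mem_of_not_regular {p a : Ordinal.{u}} (hl : l ≠ 0)
    (ha : ¬ LMARegular U l l a) (T : ι → ClosedUBT A U σ) (hpa : p + a < σ)
    {B : Set ι} (hB : #B = l) (F : Finset ι) {s : OSeq A p}
    (hs : ∀ i ∈ B ∪ ↑F, s ∈ (T i).mem p) :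
    ∃ B' : Set ι, #B' = l ∧ ∃ t : OSeq A a, ∀ i ∈ B' ∪ ↑F, oconcat s t ∈ (T i).mem (p + a) := by
  classical
  obtain ⟨e⟩ : Nonempty ((ord l).ToType ≃ B) := Cardinal.eq.1 ((mk_ord_toType l).trans hB.symm)
  have hsF (γ) : s ∈ (ClosedUBT.biInter T (insert (e γ : ι) F)).mem p := by
    intro i hi
    rcases Finset.mem_insert.1 hi with rfl | hi
    · exact hs _ (Or.inl (e γ).2)
    · exact hs _ (Or.inr hi)
  unfold LMARegular at ha
  push Not at ha
  obtain ⟨S, hS, t, ht⟩ :=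
    ha fun γ => (ClosedUBT.biInter T (insert (e γ : ι) F)).above (hsF γ) hpa
  obtain ⟨γ₀, hγ₀⟩ : S.Nonempty := by
    rw [← nonempty_coe_sort, ← mk_ne_zero_iff, hS]
    exact hl
  refine ⟨(fun γ => (e γ : ι)) '' S, ?_, t, ?_⟩
  · rw [mk_image_eq fun _ _ hγ => e.injective (Subtype.val_injective hγ), hS]
  · rintro i (⟨γ, hγ, rfl⟩ | hi)
    · exact ht γ hγ _ (Finset.mem_insert_self _ _)
    · exact ht γ₀ hγ₀ _ (Finset.mem_insert_of_mem hi)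

/-- A stage of the construction: a node `s` of length `p` lying in `l` many of the trees `T i`
(`i ∈ B`) and in each of the finitely many trees `T i` selected so far (`i ∈ F`). -/
structure Stage (l : Cardinal.{u}) (T : ι → ClosedUBT A U σ) (p : Ordinal.{u}) where
  B : Set ι
  F : Finset ι
  s : OSeq A p
  card_B : #B = l
  mem : ∀ i ∈ B ∪ ↑F, s ∈ (T i).mem p

namespace Stage

variable {T : ι → ClosedUBT A U σ}

def initial (hσ : 0 < σ) (T : ι → ClosedUBT A U σ) (hι : #ι = l) : Stage l T 0 where
  B := univ
  F := ∅
  s _ h := (not_lt_zero h).elim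
  card_B := by rwa [mk_univ]
  mem i _ :=
    ((T i).nonsucc 0 hσ (fun ⟨γ, hγ⟩ => (add_pos_of_right zero_lt_one γ).ne' hγ.symm) _).2
      fun _ h => (not_lt_zero h).elim

lemma exists_next {p a : Ordinal.{u}} (hl : ℵ₀ ≤ l) (ha : ¬ LMARegular U l l a)
    (hpa : p + a < σ) (S : Stage l T p) :
    ∃ S' : Stage l T (p + a), S.F ⊂ S'.F ∧ ores S'.s p le_self_add = S.s := by
  classical
  obtain ⟨B', hB', t, ht⟩ :=
    exists_oconcat_mem_of_not_regular (aleph0_pos.trans_le hl).ne' ha T hpa S.card_B S.F S.mem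
  have hB'inf : B'.Infinite := infinite_coe_iff.1 (Cardinal.infinite_iff.2 (hB' ▸ hl))
  obtain ⟨i, hi, hiF⟩ := hB'inf.exists_notMem_finset S.F
  refine ⟨⟨B', insert i S.F, oconcat S.s t, hB', ?_⟩, Finset.ssubset_insert hiF,
    ores_oconcat_of_le _ _ le_rfl⟩
  rintro j (hj | hj)
  · exact ht j (Or.inl hj)
  · rcases Finset.mem_insert.1 hj with rfl | hj
    · exact ht _ (Or.inl hi)
    · exact ht j (Or.inr hj)

variable (hl : ℵ₀ ≤ l) {α : ℕ → Ordinal.{u}} (h : ∀ n, ¬ LMARegular U l l (α n))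
  (hσ : ∀ n, psum α n < σ)

noncomputable def chain (S₀ : Stage l T 0) : ∀ n, Stage l T (psum α n)
  | 0 => S₀
  | n + 1 => ((chain S₀ n).exists_next hl (h n) (hσ (n + 1))).choose

lemma chain_F_ssubset (S₀ : Stage l T 0) (n : ℕ) :
    (chain hl h hσ S₀ n).F ⊂ (chain hl h hσ S₀ (n + 1)).F :=
  ((chain hl h hσ S₀ n).exists_next hl (h n) (hσ (n + 1))).choose_spec.1

lemma ores_chain_succ (S₀ : Stage l T 0) (n : ℕ) :
    ores (chain hl h hσ S₀ (n + 1)).s (psum α n) (monotone_psum α n.le_succ) =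
      (chain hl h hσ S₀ n).s :=
  ((chain hl h hσ S₀ n).exists_next hl (h n) (hσ (n + 1))).choose_spec.2

end Stage

end UMeas

open UMeas Cardinal Set in
theorem stmt16 {A : Type u} (U : Ultrafilter A) (l : Cardinal.{u})
    (hl : Cardinal.aleph0 ≤ l) (α : ℕ → Ordinal.{u})
    (h : ∀ n : ℕ, ¬ UMeas.LMARegular U l l (α n)) :
    ¬ UMeas.LMARegular U l Cardinal.aleph0 (⨆ n : ℕ, psum α n) := by
  rintro ⟨T, hT⟩
  have hbdd : BddAbove (range (psum α)) := Ordinal.bddAbove_of_small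
  have hσ (n : ℕ) : psum α n < (⨆ n, psum α n) + 1 := Order.lt_add_one_iff.2 (le_ciSup hbdd n)
  let C := Stage.chain hl h hσ (Stage.initial (hσ 0) T (mk_ord_toType l))
  have hF : StrictMono fun n => (C n).F :=
    strictMono_nat_of_lt_succ (Stage.chain_F_ssubset hl h hσ _)
  refine hT (⋃ n, ↑(C n).F) (mk_iUnion_coe_finset_eq_aleph0 hF)
    ⟨OSeq.limit fun n => (C n).s, fun i hi => ?_⟩
  obtain ⟨k, hk⟩ := mem_iUnion.1 hi
  refine OSeq.limit_mem (monotone_psum α) _ (Stage.ores_chain_succ hl h hσ _) (T i)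
    (Order.lt_add_one_iff.2 le_rfl) ?_
  filter_upwards [Filter.eventually_ge_atTop k] with n hn
  exact (C n).mem i (Or.inr (hF.monotone hn hk))
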